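/- Let S = {S_i}_{i∈E} be a separated, rotation-free similarity IFS on ℝ^d with attractor C of similarity dimension s and μ = H^s(C)^{-1}·H^s⌊C, and let Ω : ℝ^d∖{0} → ℝ be continuous, homogeneous of degree zero, and not identically zero. Set C_1 := S_1(C). Then the function f(x) := ∫_{C∖C_1} Ω(x−y)/|x−y|^s dμ(y) is not identically zero on the open set ℝ^d ∖ (C∖C_1): there exists x in this set with f(x) ≠ 0. -/

import Mathlib

open MeasureTheory Metric Set Filter
open scoped ENNReal Topology NNReal

noncomputable section

/-- Euclidean space `ℝ^d`. -/
abbrev Euc (d : ℕ) := EuclideanSpace ℝ (Fin d)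

/-- Composition `S_w = S_{w_1} ∘ ⋯ ∘ S_{w_n}` along a finite word. -/
def Sw {d N : ℕ} (S : Fin N → Euc d → Euc d) : List (Fin N) → Euc d → Euc d
  | [] => id
  | i :: t => S i ∘ Sw S t

/-- The finite word `w|_k = w_1 ⋯ w_k` of an infinite word. -/
def word {N : ℕ} (w : ℕ → Fin N) (k : ℕ) : List (Fin N) :=
  List.ofFn (fun j : Fin k => w j)

/-- Distance between two sets. -/
def setDist {X : Type*} [PseudoMetricSpace X] (A B : Set X) : ℝ :=
  sInf (Set.image2 dist A B)

/-- The word `w` repeated `m` times. -/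
def wrep {N : ℕ} (w : List (Fin N)) (m : ℕ) : List (Fin N) :=
  (List.replicate m w).flatten

/-- The unit vector `(x - ξ)/|x - ξ|`, as a point of the unit sphere. -/
def sphN {d : ℕ} (ξ x : Euc d) (h : x ≠ ξ) : sphere (0 : Euc d) 1 :=
  ⟨‖x - ξ‖⁻¹ • (x - ξ), by
    have hx : x - ξ ≠ 0 := sub_ne_zero.mpr h
    simp [mem_sphere_iff_norm, norm_smul, abs_of_nonneg,
      inv_mul_cancel₀ (norm_ne_zero_iff.mpr hx)]⟩

/-- The starred integral: the integral if the integrand is integrable on the set, else `0`. -/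
def starInt {X : Type*} [MeasurableSpace X] (μ : Measure X) (A : Set X) (g : X → ℝ) : ℝ :=
  @ite _ (IntegrableOn g A μ) (Classical.dec _) (∫ y in A, g y ∂μ) 0


section Aux13proofs
open Bornology
namespace Aux13


/-- product of ratios along a word -/
def rprod {N : ℕ} (r : Fin N → ℝ) (w : List (Fin N)) : ℝ := (w.map r).prod

@[simp] lemma rprod_nil {N : ℕ} (r : Fin N → ℝ) : rprod r [] = 1 := rfl

lemma rprod_cons {N : ℕ} (r : Fin N → ℝ) (a : Fin N) (w : List (Fin N)) :
    rprod r (a :: w) = r a * rprod r w := by simp [rprod]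

lemma rprod_append {N : ℕ} (r : Fin N → ℝ) (u w : List (Fin N)) :
    rprod r (u ++ w) = rprod r u * rprod r w := by simp [rprod]

lemma rprod_pos {N : ℕ} {r : Fin N → ℝ} (hr : ∀ i, 0 < r i) (w : List (Fin N)) :
    0 < rprod r w := by
  induction w with
  | nil => simp
  | cons a t ih => rw [rprod_cons]; exact mul_pos (hr a) ih

lemma rprod_le_one {N : ℕ} {r : Fin N → ℝ} (hr : ∀ i, 0 < r i) (hr1 : ∀ i, r i ≤ 1)
    (w : List (Fin N)) : rprod r w ≤ 1 := by
  induction w with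
  | nil => simp
  | cons a t ih =>
    rw [rprod_cons]
    calc r a * rprod r t ≤ 1 * 1 := by
          apply mul_le_mul (hr1 a) ih (rprod_pos hr t).le zero_le_one
      _ = 1 := one_mul 1

lemma rprod_prefix_ge {N : ℕ} {r : Fin N → ℝ} (hr : ∀ i, 0 < r i) (hr1 : ∀ i, r i ≤ 1)
    {u w : List (Fin N)} (h : u <+: w) : rprod r w ≤ rprod r u := by
  obtain ⟨t, rfl⟩ := h
  rw [rprod_append]
  nth_rewrite 2 [← mul_one (rprod r u)]
  exact mul_le_mul_of_nonneg_left (rprod_le_one hr hr1 t) (rprod_pos hr u).le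

lemma rprod_le_pow {N : ℕ} {r : Fin N → ℝ} {ρ : ℝ} (hr : ∀ i, 0 < r i)
    (hρ : ∀ i, r i ≤ ρ) (hρ0 : 0 ≤ ρ) (w : List (Fin N)) :
    rprod r w ≤ ρ ^ w.length := by
  induction w with
  | nil => simp
  | cons a t ih =>
    rw [rprod_cons, List.length_cons, pow_succ, mul_comm (ρ ^ t.length) ρ]
    exact mul_le_mul (hρ a) ih (rprod_pos hr t).le hρ0

/-- splitting two ≤-incomparable words at their first difference -/
lemma exists_split {α : Type*} : ∀ (w w' : List α), ¬ w <+: w' → ¬ w' <+: w →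
    ∃ (u t1 t2 : List α) (a b : α), a ≠ b ∧ w = u ++ a :: t1 ∧ w' = u ++ b :: t2 := by
  intro w
  induction w with
  | nil => intro w' h1 _; exact absurd (List.nil_prefix) h1
  | cons a t ih =>
    intro w' h1 h2
    match w' with
    | [] => exact absurd (List.nil_prefix) h2
    | b :: t' =>
      by_cases hab : a = b
      · subst hab
        have h1' : ¬ t <+: t' := fun h => h1 (List.cons_prefix_cons.mpr ⟨rfl, h⟩)
        have h2' : ¬ t' <+: t := fun h => h2 (List.cons_prefix_cons.mpr ⟨rfl, h⟩)
        obtain ⟨u, t1, t2, x, y, hxy, e1, e2⟩ := ih t' h1' h2'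
        exact ⟨a :: u, t1, t2, x, y, hxy, by simp [e1], by simp [e2]⟩
      · exact ⟨[], t, t', a, b, hab, rfl, rfl⟩



section IFS
variable {d N : ℕ} {q : Fin N → Euc d} {r : Fin N → ℝ} {S : Fin N → Euc d → Euc d}
  (hr : ∀ i, r i ∈ Set.Ioo (0:ℝ) 1) (hS : ∀ i x, S i x = q i + r i • x)

include hS hr in
lemma dist_S (i : Fin N) (x y : Euc d) : dist (S i x) (S i y) = r i * dist x y := by
  rw [hS, hS, dist_eq_norm]
  have : q i + r i • x - (q i + r i • y) = r i • (x - y) := by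
    rw [smul_sub]; abel
  rw [this, norm_smul, Real.norm_eq_abs, abs_of_pos (hr i).1, dist_eq_norm]

include hS hr in
lemma dist_Sw (w : List (Fin N)) (x y : Euc d) :
    dist (Sw S w x) (Sw S w y) = rprod r w * dist x y := by
  induction w with
  | nil => simp [Sw, rprod]
  | cons a t ih =>
    simp only [Sw, Function.comp_apply]
    rw [dist_S hr hS, ih]
    simp [rprod, mul_assoc]

lemma Sw_append {w u : List (Fin N)} : Sw S (w ++ u) = Sw S w ∘ Sw S u := by
  induction w with
  | nil => simp [Sw]
  | cons a t ih => simp [Sw, ih, Function.comp_assoc]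

variable {C : Set (Euc d)} (hCinv : C = ⋃ i, S i '' C)

include hCinv in
lemma S_image_subset (i : Fin N) : S i '' C ⊆ C := by
  conv_rhs => rw [hCinv]
  exact subset_iUnion_of_subset i le_rfl

include hCinv in
lemma Sw_image_subset (w : List (Fin N)) : Sw S w '' C ⊆ C := by
  induction w with
  | nil => simp [Sw]
  | cons a t ih =>
    have : Sw S (a :: t) '' C = S a '' (Sw S t '' C) := by
      show (S a ∘ Sw S t) '' C = _
      rw [Set.image_comp]
    rw [this]
    exact (Set.image_mono ih).trans (S_image_subset hCinv a)

include hCinv in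
lemma Sw_mem (w : List (Fin N)) {x : Euc d} (hx : x ∈ C) : Sw S w x ∈ C :=
  Sw_image_subset hCinv w ⟨x, hx, rfl⟩

include hCinv in
lemma cover_words (n : ℕ) : C ⊆ ⋃ v : Fin n → Fin N, Sw S (List.ofFn v) '' C := by
  induction n with
  | zero =>
    intro x hx
    exact Set.mem_iUnion.mpr ⟨(fun j => j.elim0), by simpa [Sw] using hx⟩
  | succ n ih =>
    intro x hx
    rw [hCinv] at hx
    obtain ⟨i, y, hy, rfl⟩ := Set.mem_iUnion.mp hx
    obtain ⟨v, z, hz, rfl⟩ := Set.mem_iUnion.mp (ih hy)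
    refine Set.mem_iUnion.mpr ⟨Fin.cons i v, z, hz, ?_⟩
    rw [List.ofFn_succ]
    simp [Sw, Fin.cons_zero, Fin.cons_succ]

end IFS

/-- packing bound by volume comparison -/
lemma packing {d : ℕ} (hd : 1 ≤ d) {a R : ℝ} (ha : 0 < a) (hR : 0 < R)
    (P : Finset (Euc d)) (x₀ : Euc d) (hP : ∀ p ∈ P, p ∈ closedBall x₀ R)
    (hsep : ∀ p ∈ P, ∀ p' ∈ P, p ≠ p' → a ≤ dist p p') :
    (P.card : ℝ) * (a/3)^d ≤ (R + a/3)^d := by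
  have hnt : Nontrivial (Euc d) := by
    have : 0 < d := hd
    exact ⟨⟨EuclideanSpace.single ⟨0, this⟩ 1, 0, by
      intro h
      have := congrArg (fun f => f ⟨0, this⟩) h
      simp [EuclideanSpace.single_apply] at this⟩⟩
  have hdisj : (P : Set (Euc d)).Pairwise (Function.onFun Disjoint fun p => ball p (a/3)) := by
    intro p hp p' hp' hne
    apply ball_disjoint_ball
    calc a/3 + a/3 ≤ a := by linarith
      _ ≤ dist p p' := hsep p hp p' hp' hne
  have hmeas : ∀ p ∈ P, MeasurableSet (ball p (a/3)) := fun p _ => measurableSet_ball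
  have hsub : (⋃ p ∈ P, ball p (a/3)) ⊆ closedBall x₀ (R + a/3) := by
    intro x hx
    simp only [Set.mem_iUnion] at hx
    obtain ⟨p, hp, hxp⟩ := hx
    have h1 := hP p hp
    simp only [mem_closedBall] at *
    have := dist_triangle x p x₀
    simp only [mem_ball] at hxp
    linarith
  have hvol := measure_biUnion_finset hdisj hmeas (μ := (volume : Measure (Euc d)))
  have hle : ∑ p ∈ P, volume (ball p (a/3)) ≤ volume (closedBall x₀ (R + a/3)) := by
    rw [← hvol]; exact measure_mono hsub
  have hfr : Module.finrank ℝ (Euc d) = d := finrank_euclideanSpace_fin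
  have hball : ∀ p : Euc d, volume (ball p (a/3)) =
      ENNReal.ofReal ((a/3)^d) * volume (ball (0 : Euc d) 1) := by
    intro p
    rw [Measure.addHaar_ball volume p (by linarith : (0:ℝ) ≤ a/3), hfr]
  have hcb : volume (closedBall x₀ (R + a/3)) =
      ENNReal.ofReal ((R + a/3)^d) * volume (ball (0 : Euc d) 1) := by
    rw [Measure.addHaar_closedBall volume x₀ (by linarith : (0:ℝ) ≤ R + a/3), hfr]
  rw [hcb] at hle
  simp only [hball, Finset.sum_const, nsmul_eq_mul] at hle
  have hv0 : volume (ball (0 : Euc d) 1) ≠ 0 := (measure_ball_pos _ _ one_pos).ne'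
  have hvt : volume (ball (0 : Euc d) 1) ≠ ⊤ := measure_ball_lt_top.ne
  have hle2 : (P.card : ℝ≥0∞) * ENNReal.ofReal ((a/3)^d) ≤ ENNReal.ofReal ((R + a/3)^d) := by
    rw [← ENNReal.mul_le_mul_iff_left hv0 hvt]
    calc (P.card : ℝ≥0∞) * ENNReal.ofReal ((a/3)^d) * volume (ball (0:Euc d) 1)
        = (P.card : ℝ≥0∞) * (ENNReal.ofReal ((a/3)^d) * volume (ball (0:Euc d) 1)) := by ring
      _ ≤ _ := by rw [← mul_assoc] at hle ⊢; exact hle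
  have := ENNReal.toReal_mono (by exact ENNReal.ofReal_ne_top) hle2
  rw [ENNReal.toReal_mul, ENNReal.toReal_natCast, ENNReal.toReal_ofReal (by positivity),
    ENNReal.toReal_ofReal (by positivity)] at this
  exact this




/-- sum over all length-`n` tuples of the product of `f` along the tuple -/
lemma sum_tuples {N n : ℕ} (f : Fin N → ℝ) :
    ∑ v : Fin n → Fin N, ∏ j, f (v j) = (∑ a, f a) ^ n := by
  rw [← Fin.prod_const n (∑ a, f a), Finset.prod_univ_sum]
  rw [← Fintype.piFinset_univ]

/-- sum over tuples with a fixed prefix -/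
lemma sum_prefix {N : ℕ} (f : Fin N → ℝ) (hf : ∀ a, 0 ≤ f a) (w : List (Fin N)) :
    ∀ (n : ℕ), w.length ≤ n →
    ∑ v : Fin n → Fin N, (if (List.ofFn v).take w.length = w then ∏ j, f (v j) else 0)
      ≤ (w.map f).prod * (∑ a, f a) ^ (n - w.length) := by
  induction w with
  | nil =>
    intro n _
    simp only [List.length_nil, List.take_zero, if_true, List.map_nil, List.prod_nil, one_mul,
      Nat.sub_zero]
    exact le_of_eq (sum_tuples f)
  | cons a w ih =>
    intro n hn
    match n, hn with
    | (m+1), hn =>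
      have hwm : w.length ≤ m := by simpa using hn
      rw [← (Fin.consEquiv (fun _ : Fin (m+1) => Fin N)).sum_comp
        (fun v => if (List.ofFn v).take (a :: w).length = a :: w then ∏ j, f (v j) else 0)]
      rw [Fintype.sum_prod_type]
      have key : ∀ (a₀ : Fin N) (v' : Fin m → Fin N),
          (if (List.ofFn ((Fin.consEquiv (fun _ : Fin (m+1) => Fin N)) (a₀, v'))).take
              (a :: w).length = a :: w
            then ∏ j, f (((Fin.consEquiv (fun _ : Fin (m+1) => Fin N)) (a₀, v')) j) else 0)
          = (if a₀ = a then f a₀ else 0) *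
            (if (List.ofFn v').take w.length = w then ∏ j, f (v' j) else 0) := by
        intro a₀ v'
        have hofn : List.ofFn ((Fin.consEquiv (fun _ : Fin (m+1) => Fin N)) (a₀, v'))
            = a₀ :: List.ofFn v' := by
          rw [List.ofFn_succ]
          simp [Fin.consEquiv]
        have hprod : ∏ j, f (((Fin.consEquiv (fun _ : Fin (m+1) => Fin N)) (a₀, v')) j)
            = f a₀ * ∏ j, f (v' j) := by
          rw [Fin.prod_univ_succ]
          simp [Fin.consEquiv]
        rw [hofn, hprod]
        simp only [List.length_cons, List.take_succ_cons, List.cons.injEq]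
        by_cases h1 : a₀ = a <;> by_cases h2 : (List.ofFn v').take w.length = w <;>
          simp [h1, h2]
      simp only [key]
      rw [← Finset.sum_mul_sum]
      simp only [Finset.sum_ite_eq' Finset.univ a f]
      simp only [Finset.mem_univ, if_true]
      have : (a :: w).map f = f a :: w.map f := rfl
      rw [this, List.prod_cons]
      have hsub : m + 1 - (a :: w).length = m - w.length := by simp
      rw [mul_assoc, hsub]
      exact mul_le_mul_of_nonneg_left (ih m hwm) (hf a)

lemma rprod_rpow {N : ℕ} {r : Fin N → ℝ} (hr : ∀ i, 0 < r i) (s : ℝ) (w : List (Fin N)) :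
    (w.map (fun a => r a ^ s)).prod = rprod r w ^ s := by
  induction w with
  | nil => simp [rprod]
  | cons a t ih =>
    have h1 : rprod r (a :: t) = r a * rprod r t := by simp [rprod]
    rw [List.map_cons, List.prod_cons, ih, h1,
      Real.mul_rpow (hr a).le (rprod_pos hr t).le]



lemma rprod_ofFn {N n : ℕ} (r : Fin N → ℝ) (v : Fin n → Fin N) :
    rprod r (List.ofFn v) = ∏ j, r (v j) := by
  simp [rprod, List.map_ofFn, List.prod_ofFn, Function.comp]

section IFS
variable {d N : ℕ} {q : Fin N → Euc d} {r : Fin N → ℝ} {S : Fin N → Euc d → Euc d}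
  (hr : ∀ i, r i ∈ Set.Ioo (0:ℝ) 1) (hS : ∀ i x, S i x = q i + r i • x)

-- assumed from earlier files:
variable (dist_Sw : ∀ (w : List (Fin N)) (x y : Euc d),
  dist (Sw S w x) (Sw S w y) = rprod r w * dist x y)

include dist_Sw in
lemma lips_Sw (w : List (Fin N)) : LipschitzWith (rprod r w).toNNReal (Sw S w) := by
  apply LipschitzWith.of_dist_le_mul
  intro x y
  rw [dist_Sw w x y]
  rcases le_or_gt 0 (rprod r w) with h | h
  · rw [Real.coe_toNNReal _ h]
  · nlinarith [dist_nonneg (x := x) (y := y), Real.coe_toNNReal' (rprod r w),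
      max_eq_right h.le]

include dist_Sw in
lemma ediam_Sw (C : Set (Euc d)) (w : List (Fin N)) :
    EMetric.diam (Sw S w '' C) ≤ (ENNReal.ofReal (rprod r w)) * EMetric.diam C := by
  have := (lips_Sw dist_Sw w).ediam_image_le C
  rwa [← ENNReal.ofReal.eq_1] at this

include hr hS in
lemma gap_exists (hN : 2 ≤ N) {C : Set (Euc d)} (hCcomp : IsCompact C)
    (hsep : ∀ i j, i ≠ j → Disjoint (S i '' C) (S j '' C)) :
    ∃ δ : ℝ, 0 < δ ∧ ∀ i j, i ≠ j → ∀ p ∈ S i '' C, ∀ p' ∈ S j '' C, δ ≤ dist p p' := by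
  have hScont : ∀ i : Fin N, Continuous (S i) := by
    intro i
    have : S i = fun x => q i + r i • x := funext (hS i)
    rw [this]
    exact continuous_const.add (continuous_const_smul _)
  have hcomp : ∀ i, IsCompact (S i '' C) := fun i => hCcomp.image (hScont i)
  have key : ∀ i j : Fin N, i ≠ j →
      ∃ δ : ℝ, 0 < δ ∧ ∀ p ∈ S i '' C, ∀ p' ∈ S j '' C, δ ≤ dist p p' := by
    intro i j hij
    obtain ⟨δ, hδ, hdisj⟩ := (hsep i j hij).exists_thickenings (hcomp i) (hcomp j).isClosed
    refine ⟨δ, hδ, fun p hp p' hp' => ?_⟩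
    by_contra hlt
    push_neg at hlt
    have h1 : p' ∈ thickening δ (S i '' C) := mem_thickening_iff.mpr ⟨p, hp, by
      rwa [dist_comm]⟩
    have h2 : p' ∈ thickening δ (S j '' C) := self_subset_thickening hδ _ hp'
    exact (hdisj.ne_of_mem h1 h2) rfl
  haveI : NeZero N := ⟨by omega⟩
  classical
  set F : Fin N × Fin N → ℝ := fun p =>
    if h : p.1 = p.2 then 1 else Classical.choose (key p.1 p.2 h) with hF
  have hFpos : ∀ p, 0 < F p := by
    intro p
    by_cases h : p.1 = p.2
    · simp [hF, h]
    · simp only [hF, dif_neg h]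
      exact (Classical.choose_spec (key p.1 p.2 h)).1
  refine ⟨Finset.univ.inf' ⟨(0,0), Finset.mem_univ _⟩ F, ?_, ?_⟩
  · rw [Finset.lt_inf'_iff (H := ⟨(0,0), Finset.mem_univ _⟩)]
    exact fun p _ => hFpos p
  · intro i j hij p hp p' hp'
    have h1 : Finset.univ.inf' ⟨(0,0), Finset.mem_univ _⟩ F ≤ F (i, j) :=
      Finset.inf'_le _ (Finset.mem_univ _)
    have h2 : F (i, j) ≤ dist p p' := by
      simp only [hF, dif_neg hij]
      exact (Classical.choose_spec (key i j hij)).2 p hp p' hp'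
    linarith

end IFS


section UB
variable {d N : ℕ} {q : Fin N → Euc d} {r : Fin N → ℝ} {S : Fin N → Euc d → Euc d}
  (hr : ∀ i, r i ∈ Set.Ioo (0:ℝ) 1) {C : Set (Euc d)}
  -- facts proved earlier:
  (ediam_Sw : ∀ (w : List (Fin N)),
    EMetric.diam (Sw S w '' C) ≤ (ENNReal.ofReal (rprod r w)) * EMetric.diam C)
  (cover_words : ∀ n : ℕ, C ⊆ ⋃ v : Fin n → Fin N, Sw S (List.ofFn v) '' C)
  (rprod_le_pow : ∀ {ρ : ℝ}, (∀ i, r i ≤ ρ) → 0 ≤ ρ → ∀ w : List (Fin N),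
    rprod r w ≤ ρ ^ w.length)
  (rprod_pos : ∀ w : List (Fin N), 0 < rprod r w)
  (rprod_ofFn : ∀ {n : ℕ} (v : Fin n → Fin N), rprod r (List.ofFn v) = ∏ j, r (v j))
  (sum_tuples : ∀ (n : ℕ) (f : Fin N → ℝ),
    ∑ v : Fin n → Fin N, ∏ j, f (v j) = (∑ a, f a) ^ n)

include hr ediam_Sw cover_words rprod_le_pow rprod_pos rprod_ofFn sum_tuples in
lemma hmeas_ub (hN : 2 ≤ N) (hCcomp : IsCompact C) {s : ℝ} (hs : 0 < s)
    (hdim : ∑ i, r i ^ s = 1) :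
    μH[s] C ≤ EMetric.diam C ^ s := by
  haveI : NeZero N := ⟨by omega⟩
  -- maximal ratio
  obtain ⟨i₀, -, hi₀⟩ := Finset.exists_max_image Finset.univ r ⟨0, Finset.mem_univ _⟩
  set ρ : ℝ := r i₀ with hρdef
  have hρ1 : ρ < 1 := (hr i₀).2
  have hρ0 : 0 < ρ := (hr i₀).1
  have hD : EMetric.diam C ≠ ∞ := hCcomp.isBounded.ediam_ne_top
  set D := EMetric.diam C with hDdef
  have htend : Tendsto (fun n : ℕ => (ENNReal.ofReal ρ) ^ n * D) atTop (𝓝 0) := by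
    have h1 : Tendsto (fun n : ℕ => (ENNReal.ofReal ρ) ^ n) atTop (𝓝 0) :=
      ENNReal.tendsto_pow_atTop_nhds_zero_of_lt_one (by
        rw [← ENNReal.ofReal_one]
        exact (ENNReal.ofReal_lt_ofReal_iff one_pos).mpr hρ1)
    simpa using ENNReal.Tendsto.mul_const h1 (Or.inr hD)
  have hle := MeasureTheory.Measure.hausdorffMeasure_le_liminf_sum s C (fun n : ℕ => (ENNReal.ofReal ρ) ^ n * D)
    htend (fun n (v : Fin n → Fin N) => Sw S (List.ofFn v) '' C) ?_ ?_
  · refine hle.trans ?_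
    have hbound : ∀ n : ℕ, ∑ v : Fin n → Fin N, EMetric.diam (Sw S (List.ofFn v) '' C) ^ s
        ≤ D ^ s := by
      intro n
      have h1 : ∀ v : Fin n → Fin N, EMetric.diam (Sw S (List.ofFn v) '' C) ^ s
          ≤ ENNReal.ofReal (rprod r (List.ofFn v) ^ s) * D ^ s := by
        intro v
        calc EMetric.diam (Sw S (List.ofFn v) '' C) ^ s
            ≤ (ENNReal.ofReal (rprod r (List.ofFn v)) * D) ^ s :=
              ENNReal.rpow_le_rpow (ediam_Sw _) hs.le
          _ = ENNReal.ofReal (rprod r (List.ofFn v)) ^ s * D ^ s :=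
              ENNReal.mul_rpow_of_nonneg _ _ hs.le
          _ = ENNReal.ofReal (rprod r (List.ofFn v) ^ s) * D ^ s := by
              rw [← ENNReal.ofReal_rpow_of_pos (rprod_pos _)]
      calc ∑ v : Fin n → Fin N, EMetric.diam (Sw S (List.ofFn v) '' C) ^ s
          ≤ ∑ v : Fin n → Fin N, ENNReal.ofReal (rprod r (List.ofFn v) ^ s) * D ^ s :=
            Finset.sum_le_sum fun v _ => h1 v
        _ = (∑ v : Fin n → Fin N, ENNReal.ofReal (rprod r (List.ofFn v) ^ s)) * D ^ s := by
            rw [Finset.sum_mul]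
        _ = ENNReal.ofReal (∑ v : Fin n → Fin N, rprod r (List.ofFn v) ^ s) * D ^ s := by
            rw [ENNReal.ofReal_sum_of_nonneg fun v _ => (Real.rpow_pos_of_pos (rprod_pos _) s).le]
        _ = D ^ s := by
            have : ∑ v : Fin n → Fin N, rprod r (List.ofFn v) ^ s = 1 := by
              have h2 : ∀ v : Fin n → Fin N, rprod r (List.ofFn v) ^ s
                  = ∏ j, r (v j) ^ s := by
                intro v
                rw [rprod_ofFn v, ← Real.finset_prod_rpow _ _ (fun j _ => (hr (v j)).1.le)]
              rw [Finset.sum_congr rfl (fun v _ => h2 v), sum_tuples n (fun a => r a ^ s), hdim,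
                one_pow]
            rw [this, ENNReal.ofReal_one, one_mul]
    calc liminf (fun n : ℕ => ∑ v : Fin n → Fin N, EMetric.diam (Sw S (List.ofFn v) '' C) ^ s)
          atTop ≤ liminf (fun _ : ℕ => D ^ s) atTop :=
            liminf_le_liminf (Eventually.of_forall hbound)
      _ = D ^ s := liminf_const _
  · refine Eventually.of_forall fun n => fun v => ?_
    refine (ediam_Sw _).trans ?_
    apply mul_le_mul_left
    have h3 : rprod r (List.ofFn v) ≤ ρ ^ n := by
      have := rprod_le_pow (fun i => hi₀ i (Finset.mem_univ i)) hρ0.le (List.ofFn v)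
      simpa using this
    calc ENNReal.ofReal (rprod r (List.ofFn v)) ≤ ENNReal.ofReal (ρ ^ n) :=
          ENNReal.ofReal_le_ofReal h3
      _ = (ENNReal.ofReal ρ) ^ n := ENNReal.ofReal_pow hρ0.le n
  · exact Eventually.of_forall fun n => cover_words n

end UB

variable {d N : ℕ}

lemma core (hd : 1 ≤ d) (hN : 2 ≤ N)
    {q : Fin N → Euc d} {r : Fin N → ℝ} {S : Fin N → Euc d → Euc d}
    (hr : ∀ i, r i ∈ Set.Ioo (0:ℝ) 1) (hS : ∀ i x, S i x = q i + r i • x)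
    {C : Set (Euc d)} (hCne : C.Nonempty) (hCinv : C = ⋃ i, S i '' C)
    {s : ℝ} (hs : 0 < s) (hdim : ∑ i, r i ^ s = 1)
    {δ : ℝ} (hδ : 0 < δ)
    (hgap : ∀ i j, i ≠ j → ∀ p ∈ S i '' C, ∀ p' ∈ S j '' C, δ ≤ dist p p')
    {ι : Type*} (F : Finset ι) (V : ι → Set (Euc d))
    (hVb : ∀ i ∈ F, Bornology.IsBounded (V i))
    (hV0 : ∀ i ∈ F, 0 < diam (V i)) (hV1 : ∀ i ∈ F, diam (V i) < 1)
    (hcov : C ⊆ ⋃ i ∈ F, V i) :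
    1 ≤ ((1 + δ/3)^d / (δ/3)^d) * ∑ i ∈ F, diam (V i) ^ s := by
  classical
  haveI : NeZero N := ⟨by omega⟩
  set K : ℝ := (1 + δ/3)^d / (δ/3)^d with hK
  have hK0 : 0 < K := by positivity
  obtain ⟨c₀, hc₀⟩ := hCne
  have hr' : ∀ i, 0 < r i := fun i => (hr i).1
  have hr1 : ∀ i, r i ≤ 1 := fun i => (hr i).2.le
  -- F is nonempty
  obtain ⟨i₀, hi₀F, -⟩ := mem_iUnion₂.mp (hcov hc₀)
  have hFne : F.Nonempty := ⟨i₀, hi₀F⟩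
  set tmin : ℝ := F.inf' hFne (fun i => diam (V i)) with htmin
  have htmin0 : 0 < tmin := by
    rw [htmin, Finset.lt_inf'_iff]
    exact fun i hi => hV0 i hi
  -- maximal contraction ratio
  obtain ⟨imax, -, himax⟩ := Finset.exists_max_image Finset.univ r ⟨0, Finset.mem_univ _⟩
  have hρ1 : r imax < 1 := (hr imax).2
  have hρ0 : 0 < r imax := (hr imax).1
  obtain ⟨n, hn⟩ := exists_pow_lt_of_lt_one htmin0 hρ1
  -- leaves
  set L : (Fin n → Fin N) → List (Fin N) := fun v => List.ofFn v with hL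
  have hlen : ∀ v, (L v).length = n := fun v => List.length_ofFn
  set xv : (Fin n → Fin N) → Euc d := fun v => Sw S (L v) c₀ with hxv
  have hxvC : ∀ v, xv v ∈ C := fun v => Sw_mem hCinv (L v) hc₀
  have hchoice : ∀ v, ∃ i, i ∈ F ∧ xv v ∈ V i := by
    intro v
    obtain ⟨i, hiF, hx⟩ := mem_iUnion₂.mp (hcov (hxvC v))
    exact ⟨i, hiF, hx⟩
  set iv : (Fin n → Fin N) → ι := fun v => (hchoice v).choose with hiv
  have hivF : ∀ v, iv v ∈ F := fun v => (hchoice v).choose_spec.1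
  have hxvV : ∀ v, xv v ∈ V (iv v) := fun v => (hchoice v).choose_spec.2
  -- crossing time
  have hPexists : ∀ v, ∃ k, rprod r ((L v).take k) ≤ diam (V (iv v)) := by
    intro v
    refine ⟨n, ?_⟩
    have h1 : (L v).take n = L v := by
      rw [← hlen v]; exact List.take_length
    rw [h1]
    have h2 : rprod r (L v) ≤ r imax ^ n := by
      have := rprod_le_pow hr' (fun i => himax i (Finset.mem_univ i)) hρ0.le (L v)
      rwa [hlen v] at this
    have h3 : tmin ≤ diam (V (iv v)) := Finset.inf'_le _ (hivF v)
    linarith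
  set kf : (Fin n → Fin N) → ℕ := fun v => Nat.find (hPexists v) with hkf
  have hk_spec : ∀ v, rprod r ((L v).take (kf v)) ≤ diam (V (iv v)) :=
    fun v => Nat.find_spec (hPexists v)
  have hk_le_n : ∀ v, kf v ≤ n := fun v => Nat.find_min' (hPexists v) (by
    have h1 : (L v).take n = L v := by rw [← hlen v]; exact List.take_length
    rw [h1]
    have h2 : rprod r (L v) ≤ r imax ^ n := by
      have := rprod_le_pow hr' (fun i => himax i (Finset.mem_univ i)) hρ0.le (L v)
      rwa [hlen v] at this
    have h3 : tmin ≤ diam (V (iv v)) := Finset.inf'_le _ (hivF v)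
    linarith)
  have hk_pos : ∀ v, 0 < kf v := by
    intro v
    rcases Nat.eq_zero_or_pos (kf v) with h | h
    · exfalso
      have := hk_spec v
      rw [h] at this
      simp only [List.take_zero] at this
      have h1 : rprod r ([] : List (Fin N)) = 1 := by simp [rprod]
      rw [h1] at this
      exact absurd this (by push_neg; exact hV1 _ (hivF v))
    · exact h
  have hk_pred : ∀ v, ¬ rprod r ((L v).take (kf v - 1)) ≤ diam (V (iv v)) :=
    fun v => Nat.find_min (hPexists v) (show kf v - 1 < kf v by have := hk_pos v; omega)
  set wv : (Fin n → Fin N) → List (Fin N) := fun v => (L v).take (kf v) with hwv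
  have hwlen : ∀ v, (wv v).length = kf v := by
    intro v
    rw [hwv]
    simp only [List.length_take, hlen v]
    exact min_eq_left (hk_le_n v)
  -- the "good word" properties
  have hgood1 : ∀ v, rprod r (wv v) ≤ diam (V (iv v)) := hk_spec
  have hgood2 : ∀ v, diam (V (iv v)) < rprod r ((wv v).take ((wv v).length - 1)) := by
    intro v
    have h1 : (wv v).take ((wv v).length - 1) = (L v).take (kf v - 1) := by
      rw [hwv, hwlen, List.take_take]
      congr 1
      omega
    rw [h1]
    exact lt_of_not_ge (hk_pred v)
  have hgood3 : ∀ v, xv v ∈ Sw S (wv v) '' C ∩ V (iv v) := by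
    intro v
    refine ⟨?_, hxvV v⟩
    have h1 : L v = wv v ++ (L v).drop (kf v) := (List.take_append_drop _ _).symm
    rw [hxv]
    simp only
    rw [h1, Sw_append]
    exact ⟨Sw S ((L v).drop (kf v)) c₀, Sw_mem hCinv _ hc₀, rfl⟩
  -- the weights
  set p : (Fin n → Fin N) → ℝ := fun v => ∏ j, (r (v j)) ^ s with hp
  have hp0 : ∀ v, 0 ≤ p v := fun v => Finset.prod_nonneg fun j _ =>
    (Real.rpow_pos_of_pos (hr' _) s).le
  have hsum1 : ∑ v, p v = 1 := by
    rw [hp]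
    have := sum_tuples (N := N) (n := n) (fun a => r a ^ s)
    rw [this, hdim, one_pow]
  -- fiberwise grouping along Φ
  set Φ : (Fin n → Fin N) → ι × List (Fin N) := fun v => (iv v, wv v) with hΦ
  have hfib : ∑ y ∈ Finset.image Φ Finset.univ,
      ∑ v ∈ Finset.univ.filter (fun v => Φ v = y), p v = ∑ v, p v :=
    Finset.sum_fiberwise_of_maps_to (fun v _ => Finset.mem_image_of_mem Φ (Finset.mem_univ v)) p
  -- step A : each fiber sum is at most (rprod w)^s
  have stepA : ∀ y ∈ Finset.image Φ Finset.univ,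
      ∑ v ∈ Finset.univ.filter (fun v => Φ v = y), p v ≤ rprod r y.2 ^ s := by
    intro y hy
    obtain ⟨v₀, -, hv₀⟩ := Finset.mem_image.mp hy
    have hylen : y.2.length = kf v₀ := by rw [← hv₀]; exact hwlen v₀
    have hy2 : y.2 = wv v₀ := by rw [← hv₀]
    have hsubset : Finset.univ.filter (fun v => Φ v = y) ⊆
        Finset.univ.filter (fun v => (List.ofFn v).take y.2.length = y.2) := by
      intro v hv
      simp only [Finset.mem_filter, Finset.mem_univ, true_and] at hv ⊢
      have h1 : wv v = y.2 := congrArg Prod.snd hv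
      rw [← h1, hwlen v]
    calc ∑ v ∈ Finset.univ.filter (fun v => Φ v = y), p v
        ≤ ∑ v ∈ Finset.univ.filter (fun v => (List.ofFn v).take y.2.length = y.2), p v :=
          Finset.sum_le_sum_of_subset_of_nonneg hsubset (fun v _ _ => hp0 v)
      _ ≤ (y.2.map (fun a => r a ^ s)).prod * (∑ a, r a ^ s) ^ (n - y.2.length) := by
          rw [Finset.sum_filter]
          exact sum_prefix (fun a => r a ^ s)
            (fun a => (Real.rpow_pos_of_pos (hr' _) s).le) y.2 n
            (by rw [hylen]; exact hk_le_n v₀)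
      _ = rprod r y.2 ^ s := by
          rw [rprod_rpow hr', hdim, one_pow, mul_one]
  have stepB : (1:ℝ) ≤ ∑ y ∈ Finset.image Φ Finset.univ, rprod r y.2 ^ s := by
    rw [← hsum1, ← hfib]
    exact Finset.sum_le_sum stepA
  -- group by the first coordinate
  have stepC : ∑ y ∈ Finset.image Φ Finset.univ, rprod r y.2 ^ s =
      ∑ i ∈ F, ∑ y ∈ (Finset.image Φ Finset.univ).filter (fun y => y.1 = i),
        rprod r y.2 ^ s := by
    symm
    apply Finset.sum_fiberwise_of_maps_to
    intro y hy
    obtain ⟨v₀, -, hv₀⟩ := Finset.mem_image.mp hy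
    rw [← hv₀]
    exact hivF v₀
  -- per-index bound
  have stepD : ∀ i ∈ F, ∑ y ∈ (Finset.image Φ Finset.univ).filter (fun y => y.1 = i),
      rprod r y.2 ^ s ≤ K * diam (V i) ^ s := by
    intro i hiF
    set t : ℝ := diam (V i) with ht
    have ht0 : 0 < t := hV0 i hiF
    set Yi := (Finset.image Φ Finset.univ).filter (fun y => y.1 = i) with hYi
    have hmem : ∀ y ∈ Yi, rprod r y.2 ≤ t ∧ t < rprod r (y.2.take (y.2.length - 1)) ∧
        (Sw S y.2 '' C ∩ V i).Nonempty := by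
      intro y hy
      rw [hYi, Finset.mem_filter] at hy
      obtain ⟨hyim, hyfst⟩ := hy
      obtain ⟨v₀, -, hv₀⟩ := Finset.mem_image.mp hyim
      have h1 : y.2 = wv v₀ := by rw [← hv₀]
      have h2 : iv v₀ = i := by rw [← hyfst, ← hv₀]
      refine ⟨?_, ?_, ?_⟩
      · rw [h1, ht, ← h2]; exact hgood1 v₀
      · rw [h1, ht, ← h2]; exact hgood2 v₀
      · rw [h1, ← h2]; exact ⟨xv v₀, hgood3 v₀⟩
    set pt : ι × List (Fin N) → Euc d := fun y =>
      if h : (Sw S y.2 '' C ∩ V i).Nonempty then h.choose else c₀ with hptdef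
    have hpt : ∀ y ∈ Yi, pt y ∈ Sw S y.2 '' C ∩ V i := by
      intro y hy
      have h := (hmem y hy).2.2
      rw [hptdef]
      simp only [dif_pos h]
      exact h.choose_spec
    have hnpre : ∀ y ∈ Yi, ∀ y' ∈ Yi, y ≠ y' → ¬ y.2 <+: y'.2 := by
      intro y hy y' hy' hne hpre
      have hfst : y.1 = y'.1 := by
        have a1 : y.1 = i := by
          have := hy
          rw [hYi, Finset.mem_filter] at this
          exact this.2
        have a2 : y'.1 = i := by
          have := hy'
          rw [hYi, Finset.mem_filter] at this
          exact this.2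
        rw [a1, a2]
      have hne2 : y.2 ≠ y'.2 := by
        intro h
        exact hne (Prod.ext hfst h)
      have hlt : y.2.length < y'.2.length :=
        lt_of_le_of_ne hpre.length_le (fun h => hne2 (hpre.eq_of_length h))
      have hpre2 : y.2 <+: y'.2.take (y'.2.length - 1) :=
        List.prefix_take_iff.mpr ⟨hpre, by omega⟩
      have h3 : rprod r (y'.2.take (y'.2.length - 1)) ≤ rprod r y.2 :=
        rprod_prefix_ge hr' hr1 hpre2
      have h4 := (hmem y hy).1
      have h5 := (hmem y' hy').2.1
      linarith
    have hsep2 : ∀ y ∈ Yi, ∀ y' ∈ Yi, y ≠ y' → δ * t ≤ dist (pt y) (pt y') := by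
      intro y hy y' hy' hne
      obtain ⟨u, t1, t2, a, b, hab, hwy, hwy'⟩ :=
        exists_split y.2 y'.2 (hnpre y hy y' hy' hne) (hnpre y' hy' y hy (Ne.symm hne))
      obtain ⟨⟨z, hz, hze⟩, -⟩ := hpt y hy
      obtain ⟨⟨z', hz', hze'⟩, -⟩ := hpt y' hy'
      have hey : pt y = Sw S u (S a (Sw S t1 z)) := by
        rw [← hze, hwy, Sw_append]; rfl
      have hey' : pt y' = Sw S u (S b (Sw S t2 z')) := by
        rw [← hze', hwy', Sw_append]; rfl
      have hdist : dist (pt y) (pt y') =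
          rprod r u * dist (S a (Sw S t1 z)) (S b (Sw S t2 z')) := by
        rw [hey, hey', dist_Sw hr hS]
      have hd1 : δ ≤ dist (S a (Sw S t1 z)) (S b (Sw S t2 z')) :=
        hgap a b hab _ ⟨Sw S t1 z, Sw_mem hCinv t1 hz, rfl⟩
          _ ⟨Sw S t2 z', Sw_mem hCinv t2 hz', rfl⟩
      have hu : t ≤ rprod r u := by
        have h1 : u <+: y.2 := ⟨a :: t1, hwy.symm⟩
        have h2 : u.length ≤ y.2.length - 1 := by
          rw [hwy]
          simp only [List.length_append, List.length_cons]
          omega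
        have h3 : u <+: y.2.take (y.2.length - 1) := List.prefix_take_iff.mpr ⟨h1, h2⟩
        have h4 : rprod r (y.2.take (y.2.length - 1)) ≤ rprod r u :=
          rprod_prefix_ge hr' hr1 h3
        have h5 := (hmem y hy).2.1
        linarith
      rw [hdist, mul_comm δ t]
      exact mul_le_mul hu hd1 hδ.le (le_of_lt (rprod_pos hr' u))
    rcases Finset.eq_empty_or_nonempty Yi with hYe | hYne
    · rw [hYe, Finset.sum_empty]
      positivity
    · obtain ⟨y₀, hy₀⟩ := hYne
      set P := Yi.image pt with hP
      have hinj : Set.InjOn pt Yi := by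
        intro y hy y' hy' heq
        by_contra hne
        have h1 := hsep2 y hy y' hy' hne
        rw [heq, dist_self] at h1
        nlinarith
      have hcard : P.card = Yi.card := Finset.card_image_of_injOn hinj
      have hball : ∀ p ∈ P, p ∈ closedBall (pt y₀) t := by
        intro p hp
        obtain ⟨y, hy, rfl⟩ := Finset.mem_image.mp hp
        rw [mem_closedBall]
        exact dist_le_diam_of_mem (hVb i hiF) (hpt y hy).2 (hpt y₀ hy₀).2
      have hPsep : ∀ p ∈ P, ∀ p' ∈ P, p ≠ p' → δ * t ≤ dist p p' := by
        intro p hp p' hp' hne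
        obtain ⟨y, hy, rfl⟩ := Finset.mem_image.mp hp
        obtain ⟨y', hy', rfl⟩ := Finset.mem_image.mp hp'
        have : y ≠ y' := fun h => hne (by rw [h])
        exact hsep2 y hy y' hy' this
      have hpack := packing hd (mul_pos hδ ht0) ht0 P (pt y₀) hball hPsep
      have hcardK : (Yi.card : ℝ) ≤ K := by
        have e1 : (δ * t / 3) ^ d = (δ/3)^d * t^d := by
          rw [← mul_pow]; ring_nf
        have e2 : (t + δ * t / 3) ^ d = (1 + δ/3)^d * t^d := by
          rw [← mul_pow]; ring_nf
        rw [hcard, e1, e2, ← mul_assoc] at hpack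
        have h6 : (Yi.card : ℝ) * (δ/3)^d ≤ (1 + δ/3)^d := by
          have htd : (0:ℝ) < t ^ d := by positivity
          exact le_of_mul_le_mul_right hpack htd
        rw [hK, le_div_iff₀ (by positivity)]
        exact h6
      calc ∑ y ∈ Yi, rprod r y.2 ^ s ≤ ∑ _y ∈ Yi, t ^ s := by
            apply Finset.sum_le_sum
            intro y hy
            exact Real.rpow_le_rpow (rprod_pos hr' y.2).le (hmem y hy).1 hs.le
        _ = (Yi.card : ℝ) * t ^ s := by rw [Finset.sum_const, nsmul_eq_mul]
        _ ≤ K * t ^ s := mul_le_mul_of_nonneg_right hcardK (by positivity)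
  calc (1:ℝ) ≤ ∑ y ∈ Finset.image Φ Finset.univ, rprod r y.2 ^ s := stepB
    _ = _ := stepC
    _ ≤ ∑ i ∈ F, K * diam (V i) ^ s := Finset.sum_le_sum stepD
    _ = K * ∑ i ∈ F, diam (V i) ^ s := by rw [Finset.mul_sum]



lemma hmeas_pos {d N : ℕ} (hd : 1 ≤ d) (hN : 2 ≤ N)
    {q : Fin N → Euc d} {r : Fin N → ℝ} {S : Fin N → Euc d → Euc d}
    (hr : ∀ i, r i ∈ Set.Ioo (0:ℝ) 1) (hS : ∀ i x, S i x = q i + r i • x)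
    {C : Set (Euc d)} (hCne : C.Nonempty) (hCcomp : IsCompact C) (hCinv : C = ⋃ i, S i '' C)
    {s : ℝ} (hs : 0 < s) (hdim : ∑ i, r i ^ s = 1)
    {δ : ℝ} (hδ : 0 < δ)
    (hgap : ∀ i j, i ≠ j → ∀ p ∈ S i '' C, ∀ p' ∈ S j '' C, δ ≤ dist p p') :
    0 < μH[s] C := by
  classical
  set K : ℝ := (1 + δ/3)^d / (δ/3)^d with hK
  have hK0 : 0 < K := by positivity
  have hc0 : (0:ℝ) < 1/(2*K) := by positivity
  refine lt_of_lt_of_le (show (0:ℝ≥0∞) < ENNReal.ofReal (1/(2*K)) by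
    simpa using hc0) ?_
  rw [MeasureTheory.Measure.hausdorffMeasure_apply]
  refine le_iSup₂_of_le (ENNReal.ofReal (1/2)) (by simp) ?_
  refine le_iInf fun U => le_iInf fun hU => le_iInf fun hUd => ?_
  -- real diameters
  set T : ℕ → ℝ := fun n => diam (U n) with hT
  have hTnn : ∀ n, 0 ≤ T n := fun n => diam_nonneg
  have hTub : ∀ n, T n ≤ 1/2 := fun n =>
    ENNReal.toReal_le_of_le_ofReal (by norm_num) (hUd n)
  have hUb : ∀ n, IsBounded (U n) := by
    intro n
    rw [Metric.isBounded_iff_ediam_ne_top]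
    exact ((hUd n).trans_lt (by simp)).ne
  -- choose thickening radii
  have hηex : ∀ n : ℕ, ∃ η : ℝ, 0 < η ∧ η ≤ 1/8 ∧
      (T n + 2*η)^s ≤ T n ^ s + (1/(2*K)) * (1/2)^(n+1) := by
    intro n
    have hcont : ContinuousAt (fun x : ℝ => (T n + 2*x)^s) 0 := by
      apply ContinuousAt.comp (g := fun z : ℝ => z ^ s)
      · simpa using Real.continuousAt_rpow_const (T n) s (Or.inr hs.le)
      · fun_prop
    have hεn : (0:ℝ) < (1/(2*K)) * (1/2)^(n+1) := by positivity
    obtain ⟨ε', hε', hball⟩ := Metric.continuousAt_iff.mp hcont _ hεn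
    refine ⟨min (ε'/2) (1/8), by positivity, min_le_right _ _, ?_⟩
    have h1 : dist (min (ε'/2) (1/8)) 0 < ε' := by
      rw [Real.dist_eq, sub_zero, abs_of_pos (by positivity)]
      calc min (ε'/2) (1/8) ≤ ε'/2 := min_le_left _ _
        _ < ε' := by linarith
    have h2 := hball h1
    rw [Real.dist_eq] at h2
    have h3 : (T n + 2*0)^s = T n ^ s := by norm_num
    rw [h3] at h2
    have := abs_lt.mp h2
    linarith [this.1, this.2]
  choose η hη1 hη2 hη3 using hηex
  set V : ℕ → Set (Euc d) := fun n => thickening (η n) (U n) with hV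
  have hcovV : C ⊆ ⋃ n, V n :=
    hU.trans (Set.iUnion_mono fun n => self_subset_thickening (hη1 n) _)
  obtain ⟨F, hF⟩ := hCcomp.elim_finite_subcover V
    (fun n => isOpen_thickening) hcovV
  set F' := F.filter (fun n => (U n).Nonempty) with hF'
  have hcov' : C ⊆ ⋃ n ∈ F', V n := by
    intro x hx
    obtain ⟨n, hnF, hxn⟩ := mem_iUnion₂.mp (hF hx)
    obtain ⟨z, hz, -⟩ := mem_thickening_iff.mp hxn
    exact mem_iUnion₂.mpr ⟨n, Finset.mem_filter.mpr ⟨hnF, ⟨z, hz⟩⟩, hxn⟩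
  have hVb : ∀ n ∈ F', IsBounded (V n) := fun n _ => (hUb n).thickening
  have hV1 : ∀ n ∈ F', diam (V n) < 1 := by
    intro n _
    calc diam (V n) ≤ T n + 2 * η n := diam_thickening_le _ (hη1 n).le
      _ ≤ 1/2 + 2 * (1/8) := by
          have := hTub n; have := hη2 n; linarith
      _ < 1 := by norm_num
  have hV0 : ∀ n ∈ F', 0 < diam (V n) := by
    intro n hn
    obtain ⟨z, hz⟩ := (Finset.mem_filter.mp hn).2
    set e : Euc d := EuclideanSpace.single (⟨0, hd⟩ : Fin d) (1:ℝ) with he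
    have hnorme : ‖e‖ = 1 := by
      rw [he, EuclideanSpace.norm_single, norm_one]
    have hz1 : z ∈ V n := self_subset_thickening (hη1 n) _ hz
    have hz2 : z + (η n / 2) • e ∈ V n := by
      apply mem_thickening_iff.mpr
      refine ⟨z, hz, ?_⟩
      rw [dist_eq_norm, add_sub_cancel_left, norm_smul, hnorme, Real.norm_eq_abs,
        abs_of_pos (by linarith [hη1 n])]
      linarith [hη1 n]
    have hdist : dist (z + (η n / 2) • e) z = η n / 2 := by
      rw [dist_eq_norm, add_sub_cancel_left, norm_smul, hnorme, Real.norm_eq_abs,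
        abs_of_pos (by linarith [hη1 n])]
      ring
    have := dist_le_diam_of_mem (hVb n hn) hz2 hz1
    rw [hdist] at this
    linarith [hη1 n]
  have hcore := core hd hN hr hS hCne hCinv hs hdim hδ hgap F' V hVb hV0 hV1 hcov'
  rw [← hK] at hcore
  -- real estimate : ∑ (T n)^s over F' is at least 1/(2K)
  have hsum2 : ∑ n ∈ F', diam (V n) ^ s ≤ (∑ n ∈ F', T n ^ s) + 1/(2*K) := by
    have h1 : ∀ n ∈ F', diam (V n) ^ s ≤ T n ^ s + (1/(2*K)) * (1/2)^(n+1) := by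
      intro n _
      calc diam (V n) ^ s ≤ (T n + 2 * η n) ^ s := by
            apply Real.rpow_le_rpow diam_nonneg (diam_thickening_le _ (hη1 n).le) hs.le
        _ ≤ T n ^ s + (1/(2*K)) * (1/2)^(n+1) := hη3 n
    calc ∑ n ∈ F', diam (V n) ^ s ≤ ∑ n ∈ F', (T n ^ s + (1/(2*K)) * (1/2)^(n+1)) :=
          Finset.sum_le_sum h1
      _ = (∑ n ∈ F', T n ^ s) + (1/(2*K)) * ∑ n ∈ F', (1/2:ℝ)^(n+1) := by
          rw [Finset.sum_add_distrib, Finset.mul_sum]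
      _ ≤ (∑ n ∈ F', T n ^ s) + (1/(2*K)) * 1 := by
          have hsummable : Summable (fun n : ℕ => (1/2:ℝ)^(n+1)) := by
            apply Summable.comp_injective (summable_geometric_of_lt_one (by norm_num)
              (by norm_num : (1/2:ℝ) < 1)) (add_left_injective 1)
          have h2 : ∑ n ∈ F', (1/2:ℝ)^(n+1) ≤ ∑' n : ℕ, (1/2:ℝ)^(n+1) :=
            Summable.sum_le_tsum F' (fun n _ => by positivity) hsummable
          have h3 : ∑' n : ℕ, (1/2:ℝ)^(n+1) = 1 := by
            have heq : (fun n : ℕ => (1/2:ℝ)^(n+1)) = fun n : ℕ => 1/2/2^n := by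
              funext n
              rw [pow_succ]
              field_simp
              rw [← mul_pow]; norm_num
            rw [heq]
            exact tsum_geometric_two' 1
          rw [h3] at h2
          have : (0:ℝ) ≤ 1/(2*K) := by positivity
          nlinarith
      _ = (∑ n ∈ F', T n ^ s) + 1/(2*K) := by ring
  have hreal : 1/(2*K) ≤ ∑ n ∈ F', T n ^ s := by
    have h4 : 1 ≤ K * ((∑ n ∈ F', T n ^ s) + 1/(2*K)) := by
      calc (1:ℝ) ≤ K * ∑ n ∈ F', diam (V n) ^ s := hcore
        _ ≤ K * ((∑ n ∈ F', T n ^ s) + 1/(2*K)) :=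
            mul_le_mul_of_nonneg_left hsum2 hK0.le
    have h5 : K * (1/(2*K)) = 1/2 := by field_simp
    have h6 : 1 ≤ K * (∑ n ∈ F', T n ^ s) + 1/2 := by
      rw [mul_add, h5] at h4; linarith
    rw [div_le_iff₀ (by positivity : (0:ℝ) < 2*K)]
    nlinarith
  -- pass to ℝ≥0∞
  calc ENNReal.ofReal (1/(2*K)) ≤ ENNReal.ofReal (∑ n ∈ F', T n ^ s) :=
        ENNReal.ofReal_le_ofReal hreal
    _ = ∑ n ∈ F', ENNReal.ofReal (T n ^ s) :=
        ENNReal.ofReal_sum_of_nonneg (fun n _ => by positivity)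
    _ ≤ ∑ n ∈ F', ⨆ _ : (U n).Nonempty, EMetric.diam (U n) ^ s := by
        apply Finset.sum_le_sum
        intro n hn
        have hne : (U n).Nonempty := (Finset.mem_filter.mp hn).2
        rw [iSup_pos hne]
        have hU_ediam : EMetric.diam (U n) = ENNReal.ofReal (T n) := by
          rw [hT]
          exact (ENNReal.ofReal_toReal ((hUd n).trans_lt (by simp)).ne).symm
        rw [hU_ediam, ← ENNReal.ofReal_rpow_of_nonneg (hTnn n) hs.le]
    _ ≤ ∑' n, ⨆ _ : (U n).Nonempty, EMetric.diam (U n) ^ s := ENNReal.sum_le_tsum F'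

lemma hmeas_fin {d N : ℕ} (hN : 2 ≤ N)
    {q : Fin N → Euc d} {r : Fin N → ℝ} {S : Fin N → Euc d → Euc d}
    (hr : ∀ i, r i ∈ Set.Ioo (0:ℝ) 1) (hS : ∀ i x, S i x = q i + r i • x)
    {C : Set (Euc d)} (hCcomp : IsCompact C) (hCinv : C = ⋃ i, S i '' C)
    {s : ℝ} (hs : 0 < s) (hdim : ∑ i, r i ^ s = 1) :
    μH[s] C ≠ ⊤ := by
  have h := hmeas_ub hr (ediam_Sw (dist_Sw hr hS) C) (cover_words hCinv)
      (fun {ρ} hρ hρ0 w => rprod_le_pow (fun i => (hr i).1) hρ hρ0 w)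
      (rprod_pos (fun i => (hr i).1)) (fun {n} v => rprod_ofFn r v)
      (fun n f => sum_tuples f) hN hCcomp hs hdim
  exact ne_top_of_le_ne_top
    (ENNReal.rpow_lt_top_of_nonneg hs.le hCcomp.isBounded.ediam_ne_top).ne h

end Aux13
end Aux13proofs

set_option maxHeartbeats 1000000 in
open Aux13 in
/-- For a separated, rotation-free similarity IFS on `ℝ^d` and a continuous,
not identically vanishing `Ω`, homogeneous of degree zero, the function
`f(x) = ∫_{C∖C_1} Ω(x−y)/|x−y|^s dμ(y)` is not identically zero on `ℝ^d∖(C∖C_1)`. -/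
theorem stmt13
    {d N : ℕ} (hd : 1 ≤ d) (hN : 2 ≤ N)
    (q : Fin N → Euc d) (r : Fin N → ℝ) (hr : ∀ i, r i ∈ Set.Ioo (0:ℝ) 1)
    (S : Fin N → Euc d → Euc d) (hS : ∀ i x, S i x = q i + r i • x)
    (C : Set (Euc d)) (hCne : C.Nonempty) (hCcomp : IsCompact C)
    (hCinv : C = ⋃ i, S i '' C)
    (hsep : ∀ i j, i ≠ j → Disjoint (S i '' C) (S j '' C))
    (s : ℝ) (hs : 0 < s) (hdim : ∑ i, r i ^ s = 1)
    (μ : Measure (Euc d)) (hμ : μ = (μH[s] C)⁻¹ • μH[s].restrict C)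
    (Ω : Euc d → ℝ)
    (hΩc : ContinuousOn Ω {x | x ≠ 0})
    (hΩne : ∃ x, x ≠ 0 ∧ Ω x ≠ 0)
    (hΩhom : ∀ c : ℝ, 0 < c → ∀ x, x ≠ 0 → Ω (c • x) = Ω x) :
    ∃ x ∈ (C \ S ⟨0, by omega⟩ '' C)ᶜ,
      (∫ y in C \ S ⟨0, by omega⟩ '' C, Ω (x - y) / ‖x - y‖ ^ s ∂μ) ≠ 0 := by
  classical
  set i1 : Fin N := ⟨0, by omega⟩ with hi1
  set i2 : Fin N := ⟨1, by omega⟩ with hi2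
  have hi12 : i2 ≠ i1 := by
    simp [hi1, hi2, Fin.ext_iff]
  set A : Set (Euc d) := C \ S i1 '' C with hA
  obtain ⟨δ, hδ, hgap⟩ := gap_exists hr hS hN hCcomp hsep
  have hpos : 0 < μH[s] C := hmeas_pos hd hN hr hS hCne hCcomp hCinv hs hdim hδ hgap
  have hfin : μH[s] C ≠ ⊤ := hmeas_fin hN hr hS hCcomp hCinv hs hdim
  have hScont : ∀ i : Fin N, Continuous (S i) := by
    intro i
    have : S i = fun x => q i + r i • x := funext (hS i)
    rw [this]
    exact continuous_const.add (continuous_const_smul _)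
  have hSiC_comp : ∀ i, IsCompact (S i '' C) := fun i => hCcomp.image (hScont i)
  have hS1meas : MeasurableSet (S i1 '' C) := (hSiC_comp i1).isClosed.measurableSet
  have hAmeas : MeasurableSet A := hCcomp.isClosed.measurableSet.diff hS1meas
  -- A is the union of the other pieces, hence compact
  have hAeq : A = ⋃ i : {i : Fin N // i ≠ i1}, S i.1 '' C := by
    apply Set.Subset.antisymm
    · rintro x ⟨hxC, hx1⟩
      rw [hCinv] at hxC
      obtain ⟨i, hxi⟩ := Set.mem_iUnion.mp hxC
      rcases eq_or_ne i i1 with rfl | hne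
      · exact absurd hxi hx1
      · exact Set.mem_iUnion.mpr ⟨⟨i, hne⟩, hxi⟩
    · rintro x hx
      obtain ⟨⟨i, hne⟩, hxi⟩ := Set.mem_iUnion.mp hx
      refine ⟨?_, ?_⟩
      · rw [hCinv]; exact Set.mem_iUnion.mpr ⟨i, hxi⟩
      · intro hx1
        exact (hsep i i1 hne).ne_of_mem hxi hx1 rfl
  have hAcomp : IsCompact A := by
    rw [hAeq]
    exact isCompact_iUnion fun i => hSiC_comp i.1
  have hAsub : A ⊆ C := Set.diff_subset
  -- μ is a probability measure
  haveI hprob : IsProbabilityMeasure μ := by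
    constructor
    rw [hμ, Measure.smul_apply, Measure.restrict_apply MeasurableSet.univ, Set.univ_inter,
      smul_eq_mul]
    exact ENNReal.inv_mul_cancel hpos.ne' hfin
  -- μ A is positive
  have hS2sub : S i2 '' C ⊆ A := by
    intro x hx
    refine ⟨(by rw [hCinv]; exact Set.mem_iUnion.mpr ⟨i2, hx⟩), ?_⟩
    intro hx1
    exact (hsep i2 i1 hi12).ne_of_mem hx hx1 rfl
  have hS2pos : 0 < μH[s] (S i2 '' C) := by
    rcases eq_or_lt_of_le (zero_le (a := μH[s] (S i2 '' C))) with h | h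
    · exfalso
      have hanti : AntilipschitzWith ((r i2)⁻¹.toNNReal) (S i2) := by
        apply AntilipschitzWith.of_le_mul_dist
        intro x y
        have h1 : dist (S i2 x) (S i2 y) = r i2 * dist x y := by
          rw [hS, hS, dist_eq_norm]
          have : q i2 + r i2 • x - (q i2 + r i2 • y) = r i2 • (x - y) := by
            rw [smul_sub]; abel
          rw [this, norm_smul, Real.norm_eq_abs, abs_of_pos (hr i2).1, dist_eq_norm]
        rw [h1, Real.coe_toNNReal _ (inv_nonneg.mpr (hr i2).1.le), ← mul_assoc,
          inv_mul_cancel₀ (hr i2).1.ne', one_mul]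
      have h2 := hanti.le_hausdorffMeasure_image hs.le C
      rw [← h, mul_zero] at h2
      exact absurd (le_antisymm h2 zero_le) hpos.ne'
    · exact h
  have hμA_pos : 0 < μ A := by
    rw [hμ, Measure.smul_apply, Measure.restrict_apply hAmeas,
      Set.inter_eq_self_of_subset_left hAsub, smul_eq_mul]
    apply ENNReal.mul_pos
    · simp [hfin]
    · exact (lt_of_lt_of_le hS2pos (measure_mono hS2sub)).ne'
  have hμA_fin : μ A ≠ ⊤ := measure_ne_top μ A
  have hμAr : 0 < (μ A).toReal := ENNReal.toReal_pos hμA_pos.ne' hμA_fin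
  -- pick the direction θ
  obtain ⟨θ, hθ0, hθΩ⟩ := hΩne
  have hθn : 0 < ‖θ‖ := norm_pos_iff.mpr hθ0
  -- bound on A
  obtain ⟨M, hM⟩ := isBounded_iff_forall_norm_le.mp hAcomp.isBounded
  set M' : ℝ := max M 0 with hM'
  have hM'0 : 0 ≤ M' := le_max_right _ _
  have hMA : ∀ y ∈ A, ‖y‖ ≤ M' := fun y hy => (hM y hy).trans (le_max_left _ _)
  -- continuity of Ω at θ
  have hΩat : ContinuousAt Ω θ := by
    apply hΩc.continuousAt
    have : IsOpen {x : Euc d | x ≠ 0} := isOpen_compl_singleton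
    exact this.mem_nhds hθ0
  have habs : 0 < |Ω θ| / 2 := by
    have : Ω θ ≠ 0 := hθΩ
    positivity
  obtain ⟨ε, hε, hcont⟩ := Metric.continuousAt_iff.mp hΩat _ habs
  set ε' : ℝ := min ε ‖θ‖ with hε'
  have hε'0 : 0 < ε' := lt_min hε hθn
  -- choice of R
  set R : ℝ := (M' + 1) * (1/ε' + 1/‖θ‖) with hR
  have hR0 : 0 < R := by positivity
  have hRθ : M' < R * ‖θ‖ := by
    have h1 : R * ‖θ‖ = (M' + 1) * (‖θ‖/ε') + (M' + 1) := by
      rw [hR]; field_simp [hε'0.ne', hθn.ne']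
    nlinarith [div_pos hθn hε'0]
  have hRy : ∀ y ∈ A, ‖y‖ < R * ε' := by
    intro y hy
    have h1 : R * ε' = (M' + 1) + (M' + 1) * (ε'/‖θ‖) := by
      rw [hR]; field_simp [hε'0.ne', hθn.ne']
    have := hMA y hy
    nlinarith [div_pos hε'0 hθn]
  set x : Euc d := R • θ with hx
  have hxn : ‖x‖ = R * ‖θ‖ := by
    rw [hx, norm_smul, Real.norm_eq_abs, abs_of_pos hR0]
  have hxA : x ∉ A := by
    intro hxA
    have := hMA x hxA
    rw [hxn] at this
    linarith
  refine ⟨x, by simpa using hxA, ?_⟩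
  -- pointwise facts
  have key : ∀ y ∈ A,
      x - y ≠ 0 ∧ Ω (x - y) = Ω (θ - R⁻¹ • y) ∧ |Ω (θ - R⁻¹ • y) - Ω θ| < |Ω θ|/2 ∧
      ‖x - y‖ ≤ R * ‖θ‖ + M' := by
    intro y hy
    have hyM := hMA y hy
    have hyR := hRy y hy
    have hinvy : ‖R⁻¹ • y‖ < ε' := by
      rw [norm_smul, Real.norm_eq_abs, abs_of_pos (by positivity)]
      calc R⁻¹ * ‖y‖ < R⁻¹ * (R * ε') := mul_lt_mul_of_pos_left hyR (by positivity)
        _ = ε' := by field_simp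
    have hdec : x - y = R • (θ - R⁻¹ • y) := by
      rw [hx, smul_sub, smul_inv_smul₀ hR0.ne']
    have hθy : θ - R⁻¹ • y ≠ 0 := by
      intro h
      have h2 : θ = R⁻¹ • y := by
        rwa [sub_eq_zero] at h
      rw [h2] at hθn
      have h3 : ‖R⁻¹ • y‖ < ε' := hinvy
      have h4 : ε' ≤ ‖R⁻¹ • y‖ := (min_le_right ε ‖θ‖).trans_eq (by rw [h2])
      linarith
    refine ⟨?_, ?_, ?_, ?_⟩
    · rw [hdec]
      exact smul_ne_zero hR0.ne' hθy
    · rw [hdec]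
      exact hΩhom R hR0 _ hθy
    · apply hcont
      rw [dist_eq_norm]
      have : θ - R⁻¹ • y - θ = -(R⁻¹ • y) := by abel
      rw [this, norm_neg]
      exact lt_of_lt_of_le hinvy (min_le_left _ _)
    · calc ‖x - y‖ ≤ ‖x‖ + ‖y‖ := norm_sub_le _ _
        _ ≤ R * ‖θ‖ + M' := by rw [hxn]; linarith
  set D : ℝ := R * ‖θ‖ + M' with hD
  have hD0 : 0 < D := by positivity
  -- integrability
  have hg_cont : ContinuousOn (fun y => Ω (x - y) / ‖x - y‖ ^ s) A := by
    apply ContinuousOn.div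
    · apply hΩc.comp ((continuous_const.sub continuous_id).continuousOn)
      intro y hy
      exact (key y hy).1
    · intro y hy
      apply ContinuousAt.continuousWithinAt
      apply ContinuousAt.rpow_const
        ((continuous_const.sub continuous_id).norm.continuousAt)
      exact Or.inl (norm_ne_zero_iff.mpr (key y hy).1)
    · intro y hy
      have h0 : 0 < ‖x - y‖ := norm_pos_iff.mpr (key y hy).1
      positivity
  have hg_int : IntegrableOn (fun y => Ω (x - y) / ‖x - y‖ ^ s) A μ :=
    hg_cont.integrableOn_compact hAcomp
  have hnorm_bound : ∀ y ∈ A, 0 < ‖x - y‖ ∧ ‖x - y‖ ^ s ≤ D ^ s := by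
    intro y hy
    exact ⟨norm_pos_iff.mpr (key y hy).1,
      Real.rpow_le_rpow (norm_nonneg _) (key y hy).2.2.2 hs.le⟩
  -- the common positivity engine
  have engine : ∀ (f : Euc d → ℝ) (c : ℝ), 0 < c → IntegrableOn f A μ →
      (∀ y ∈ A, c ≤ f y) → 0 < ∫ y in A, f y ∂μ := by
    intro f c hc hint hlb
    have := setIntegral_ge_of_const_le hAmeas hμA_fin hlb hint
    rw [smul_eq_mul, measureReal_def] at this
    nlinarith [this, mul_pos hc hμAr]
  have hfrac : ∀ (a c0 b : ℝ), 0 < c0 → c0 ≤ a → 0 < b → b ≤ D ^ s →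
      c0 / D ^ s ≤ a / b := by
    intro a c0 b hc0 hca hb hbD
    rw [div_le_div_iff₀ (by positivity) hb]
    nlinarith
  rcases lt_or_gt_of_ne hθΩ with hneg | hpos2
  · -- Ω θ < 0 : the integral is negative
    set c0 : ℝ := (-(Ω θ)/2) / D ^ s with hc0def
    have hc0 : 0 < c0 := by
      have : 0 < -(Ω θ) := by linarith
      positivity
    have hlb : ∀ y ∈ A, c0 ≤ -(Ω (x - y) / ‖x - y‖ ^ s) := by
      intro y hy
      obtain ⟨h1, h2, h3, h4⟩ := key y hy
      obtain ⟨h5, h6⟩ := hnorm_bound y hy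
      have h7 : -(Ω (x - y)) ≥ -(Ω θ)/2 := by
        rw [h2]
        have := abs_lt.mp h3
        rw [abs_of_neg hneg] at this
        linarith [this.2]
      have h9 : (0:ℝ) < ‖x - y‖ ^ s := by positivity
      rw [neg_div']
      exact hfrac _ _ _ (by linarith) h7 h9 h6
    have hint := engine (fun y => -(Ω (x - y) / ‖x - y‖ ^ s)) c0 hc0 hg_int.neg hlb
    rw [integral_neg] at hint
    intro hzero
    rw [hzero] at hint
    simp at hint
  · -- Ω θ > 0 : the integral is positive
    set c0 : ℝ := (Ω θ/2) / D ^ s with hc0def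
    have hc0 : 0 < c0 := by positivity
    have hlb : ∀ y ∈ A, c0 ≤ Ω (x - y) / ‖x - y‖ ^ s := by
      intro y hy
      obtain ⟨h1, h2, h3, h4⟩ := key y hy
      obtain ⟨h5, h6⟩ := hnorm_bound y hy
      have h7 : Ω (x - y) ≥ Ω θ/2 := by
        rw [h2]
        have := abs_lt.mp h3
        rw [abs_of_pos hpos2] at this
        linarith [this.1]
      have h9 : (0:ℝ) < ‖x - y‖ ^ s := by positivity
      exact hfrac _ _ _ (by linarith) h7 h9 h6
    have hint := engine (fun y => Ω (x - y) / ‖x - y‖ ^ s) c0 hc0 hg_int hlb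
    exact hint.ne'
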